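/- Let n = (n₁, n₂) ∈ ℝ² with n ≠ 0, set s = √(n₁² + n₂²), and let A = n₁·A₁ + n₂·A₂ where A₁ = ![![0,0,1],![0,0,0],![1,0,0]] and A₂ = ![![0,0,0],![0,0,1],![0,1,0]]. Then the matrix |A| := (1/s)·A² is symmetric positive semidefinite and satisfies |A|² = A²; that is, |A| is the positive semidefinite square root of A². -/

import Mathlib

theorem abs_matrix_is_posSemidef_sqrt_of_sq
    (n₁ n₂ : ℝ) (hn : (n₁, n₂) ≠ (0, 0))
    (s : ℝ) (hs : s = Real.sqrt (n₁ ^ 2 + n₂ ^ 2))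
    (A₁ A₂ A absA : Matrix (Fin 3) (Fin 3) ℝ)
    (hA₁ : A₁ = !![0,0,1; 0,0,0; 1,0,0])
    (hA₂ : A₂ = !![0,0,0; 0,0,1; 0,1,0])
    (hA : A = n₁ • A₁ + n₂ • A₂)
    (habs : absA = (1 / s) • (A * A)) :
    absA.IsSymm ∧ absA.PosSemidef ∧ absA * absA = A * A := by
  have hpos : 0 < n₁ ^ 2 + n₂ ^ 2 := by
    rcases (Prod.mk.injEq .. ▸ fun h => hn (by simp [Prod.ext_iff] at h ⊢; exact h) :
        ¬ (n₁ = 0 ∧ n₂ = 0)) with h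
    by_contra hc
    push_neg at hc
    have h1 : n₁ = 0 := by nlinarith [sq_nonneg n₁, sq_nonneg n₂]
    have h2 : n₂ = 0 := by nlinarith [sq_nonneg n₁, sq_nonneg n₂]
    exact hn (by simp [h1, h2])
  have hs0 : 0 < s := hs ▸ Real.sqrt_pos.mpr hpos
  have hs2 : s ^ 2 = n₁ ^ 2 + n₂ ^ 2 := by
    rw [hs, Real.sq_sqrt hpos.le]
  have hAA : A * A = !![n₁^2, n₁*n₂, 0; n₁*n₂, n₂^2, 0; 0, 0, s^2] := by
    subst hA hA₁ hA₂
    rw [hs2]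
    ext i j
    fin_cases i <;> fin_cases j <;>
      simp [Matrix.mul_apply, Fin.sum_univ_three] <;> ring
  have hAbs : absA = !![n₁^2/s, n₁*n₂/s, 0; n₁*n₂/s, n₂^2/s, 0; 0, 0, s] := by
    rw [habs, hAA]
    ext i j
    fin_cases i <;> fin_cases j <;>
      simp [Matrix.smul_apply] <;> field_simp <;> ring
  refine ⟨?_, ?_, ?_⟩
  · rw [hAbs]
    ext i j
    fin_cases i <;> fin_cases j <;> simp [Matrix.transpose_apply] <;> ring
  · refine Matrix.posSemidef_iff_dotProduct_mulVec.mpr ⟨?_, ?_⟩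
    · rw [hAbs]
      ext i j
      fin_cases i <;> fin_cases j <;> simp [Matrix.conjTranspose_apply] <;> ring
    · intro x
      rw [hAbs]
      simp only [dotProduct, Matrix.mulVec, Fin.sum_univ_three, RCLike.star_def]
      simp [dotProduct, Fin.sum_univ_three]
      have key : (n₁ * x 0 + n₂ * x 1) ^ 2 / s + s * (x 2) ^ 2 =
          x 0 * (n₁ ^ 2 / s * x 0 + n₁ * n₂ / s * x 1) +
          x 1 * (n₁ * n₂ / s * x 0 + n₂ ^ 2 / s * x 1) + x 2 * (s * x 2) := by
        field_simp
      rw [← key]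
      positivity
  · rw [hAbs, hAA]
    ext i j
    fin_cases i <;> fin_cases j
    all_goals simp [Matrix.mul_apply, Fin.sum_univ_three]
    all_goals (try field_simp)
    · linear_combination (-n₁ ^ 2) * hs2
    · linear_combination (-(n₁ * n₂)) * hs2
    · linear_combination (-(n₁ * n₂)) * hs2
    · linear_combination (-n₂ ^ 2) * hs2
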